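/- Fix a policy π with transition matrix P_π and rewards r_π (‖r_π‖_∞ ≤ R_max), initial distribution p0, and discount γ ∈ (0,1). If ξ is another transition matrix with ‖P_π(·|x) - ξ_π(·|x)‖_1 ≤ 2e_π(x) for all states x, then |ρ(π, P) - ρ(π, ξ)| ≤ (2γ R_max/(1-γ)) · p0ᵀ (I - γ P_π)^{-1} e_π, where ρ(π, Q) = p0ᵀ (I - γ Q_π)^{-1} r_π. -/

import Mathlib

/-!
For `Q` stochastic and `0 ≤ γ < 1`, a discrete minimum principle holds: if `(1 - γ Q) w ≥ 0`
then `w ≥ 0` (evaluate at a minimum of `w`). Hence `1 - γ Q` is invertible with monotone inverse,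
and since it maps the constant `c` to `c / (1 - γ)`, that inverse bounds sup norms by `1 / (1 - γ)`.
The resolvent identity
`(1 - γ P)⁻¹ - (1 - γ ξ)⁻¹ = (1 - γ P)⁻¹ (γ (P - ξ)) (1 - γ ξ)⁻¹`
writes the return difference as `p0 ⬝ (1 - γ P)⁻¹ u` with `u = γ (P - ξ) v`, `v = (1 - γ ξ)⁻¹ r`.
As `|v| ≤ Rmax / (1 - γ)`, each `|u x|` is at most `γ ‖P x - ξ x‖₁ Rmax / (1 - γ)`,
and monotonicity of `(1 - γ P)⁻¹` carries this pointwise bound to the returns.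
-/

open Matrix Finset

namespace Matrix

lemma abs_mulVec_apply_le {X Y : Type*} [Fintype Y] (M : Matrix X Y ℝ) {w : Y → ℝ} {m : ℝ}
    (hw : ∀ y, |w y| ≤ m) (x : X) : |(M *ᵥ w) x| ≤ (∑ y, |M x y|) * m := by
  rw [sum_mul]
  refine (abs_sum_le_sum_abs _ _).trans (sum_le_sum fun y _ => ?_)
  rw [abs_mul]
  exact mul_le_mul_of_nonneg_left (hw y) (abs_nonneg _)

lemma abs_dotProduct_le_of_nonneg {X : Type*} [Fintype X] {p w c : X → ℝ} (hp : 0 ≤ p)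
    (hwc : ∀ x, |w x| ≤ c x) : |p ⬝ᵥ w| ≤ p ⬝ᵥ c := by
  rw [abs_le, ← dotProduct_neg]
  exact ⟨dotProduct_le_dotProduct_of_nonneg_left (fun x => (abs_le.1 (hwc x)).1) hp,
    dotProduct_le_dotProduct_of_nonneg_left (fun x => (abs_le.1 (hwc x)).2) hp⟩

variable {X : Type*} [Fintype X] [DecidableEq X] {Q : Matrix X X ℝ}

lemma le_mulVec_apply_of_mem_rowStochastic (hQ : Q ∈ rowStochastic ℝ X) {m : ℝ} {w : X → ℝ}
    (hw : ∀ y, m ≤ w y) (x : X) : m ≤ (Q *ᵥ w) x := by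
  have h := nonneg_mulVec_of_mem_rowStochastic hQ (x := w - m • 1)
    (fun y => by simpa using hw y) x
  simpa [mulVec_sub, mulVec_smul, one_vecMul_of_mem_rowStochastic hQ] using h

variable {γ : ℝ} (hQ : Q ∈ rowStochastic ℝ X) (hγ0 : 0 ≤ γ) (hγ1 : γ < 1)
include hQ hγ0 hγ1

lemma nonneg_of_nonneg_one_sub_smul_mulVec {w : X → ℝ} (hw : 0 ≤ (1 - γ • Q) *ᵥ w) : 0 ≤ w := by
  intro x
  obtain ⟨x₀, -, hmin⟩ := exists_min_image univ w ⟨x, mem_univ x⟩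
  have hQw : w x₀ ≤ (Q *ᵥ w) x₀ :=
    le_mulVec_apply_of_mem_rowStochastic hQ (fun y => hmin y (mem_univ y)) x₀
  have hw₀ : 0 ≤ w x₀ - γ * (Q *ᵥ w) x₀ := by
    simpa only [sub_mulVec, smul_mulVec, one_mulVec, Pi.sub_apply, Pi.smul_apply, smul_eq_mul,
      Pi.zero_apply] using hw x₀
  have hx₀ : 0 ≤ w x₀ := by nlinarith [mul_le_mul_of_nonneg_left hQw hγ0]
  exact hx₀.trans (hmin x (mem_univ x))

lemma isUnit_det_one_sub_smul_of_mem_rowStochastic : IsUnit (1 - γ • Q).det := by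
  rw [isUnit_iff_ne_zero, Ne, ← exists_mulVec_eq_zero_iff]
  rintro ⟨v, hv, hMv⟩
  have hv_nonneg := nonneg_of_nonneg_one_sub_smul_mulVec hQ hγ0 hγ1 (w := v) hMv.ge
  have hv_nonpos := nonneg_of_nonneg_one_sub_smul_mulVec hQ hγ0 hγ1 (w := -v)
    (by rw [mulVec_neg, hMv, neg_zero])
  exact hv (le_antisymm (neg_nonneg.1 hv_nonpos) hv_nonneg)

lemma one_sub_smul_mulVec_inv_mulVec (u : X → ℝ) :
    (1 - γ • Q) *ᵥ ((1 - γ • Q)⁻¹ *ᵥ u) = u := by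
  rw [mulVec_mulVec, mul_nonsing_inv _ (isUnit_det_one_sub_smul_of_mem_rowStochastic hQ hγ0 hγ1),
    one_mulVec]

lemma inv_one_sub_smul_mulVec_mono {u v : X → ℝ} (huv : u ≤ v) :
    (1 - γ • Q)⁻¹ *ᵥ u ≤ (1 - γ • Q)⁻¹ *ᵥ v := by
  refine sub_nonneg.1 (nonneg_of_nonneg_one_sub_smul_mulVec hQ hγ0 hγ1 ?_)
  rw [mulVec_sub, one_sub_smul_mulVec_inv_mulVec hQ hγ0 hγ1,
    one_sub_smul_mulVec_inv_mulVec hQ hγ0 hγ1]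
  exact sub_nonneg.2 huv

lemma abs_inv_one_sub_smul_mulVec_apply_le {u c : X → ℝ} (huc : ∀ y, |u y| ≤ c y) (x : X) :
    |((1 - γ • Q)⁻¹ *ᵥ u) x| ≤ ((1 - γ • Q)⁻¹ *ᵥ c) x := by
  rw [abs_le, ← Pi.neg_apply, ← mulVec_neg]
  exact ⟨inv_one_sub_smul_mulVec_mono hQ hγ0 hγ1 (fun y => (abs_le.1 (huc y)).1) x,
    inv_one_sub_smul_mulVec_mono hQ hγ0 hγ1 (fun y => (abs_le.1 (huc y)).2) x⟩

lemma inv_one_sub_smul_mulVec_const (c : ℝ) :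
    (1 - γ • Q)⁻¹ *ᵥ (c • 1) = (c / (1 - γ)) • 1 := by
  have hfix : (1 - γ • Q) *ᵥ ((c / (1 - γ)) • 1) = c • 1 := by
    rw [sub_mulVec, one_mulVec, smul_mulVec, mulVec_smul, one_vecMul_of_mem_rowStochastic hQ,
      smul_smul, ← sub_smul]
    congr 1
    field_simp [(sub_pos.2 hγ1).ne']
  rw [← hfix, mulVec_mulVec,
    nonsing_inv_mul _ (isUnit_det_one_sub_smul_of_mem_rowStochastic hQ hγ0 hγ1), one_mulVec]

lemma abs_inv_one_sub_smul_mulVec_apply_le_div {u : X → ℝ} {m : ℝ} (hu : ∀ y, |u y| ≤ m)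
    (x : X) : |((1 - γ • Q)⁻¹ *ᵥ u) x| ≤ m / (1 - γ) := by
  simpa [inv_one_sub_smul_mulVec_const hQ hγ0 hγ1] using
    abs_inv_one_sub_smul_mulVec_apply_le hQ hγ0 hγ1 (c := m • 1) (by simpa using hu) x

lemma inv_one_sub_smul_sub_inv_one_sub_smul {Q' : Matrix X X ℝ}
    (hQ' : Q' ∈ rowStochastic ℝ X) :
    (1 - γ • Q)⁻¹ - (1 - γ • Q')⁻¹ = (1 - γ • Q)⁻¹ * (γ • (Q - Q')) * (1 - γ • Q')⁻¹ := by
  rw [inv_sub_inv]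
  · congr 2
    rw [smul_sub]
    abel
  · simp only [isUnit_iff_isUnit_det, isUnit_det_one_sub_smul_of_mem_rowStochastic hQ hγ0 hγ1,
      isUnit_det_one_sub_smul_of_mem_rowStochastic hQ' hγ0 hγ1]

end Matrix

theorem return_difference_bound_general {X : Type*} [Fintype X] [DecidableEq X]
    (Pπ ξπ : Matrix X X ℝ)
    (hP : (∀ x y, 0 ≤ Pπ x y) ∧ ∀ x, ∑ y, Pπ x y = 1)
    (hξ : (∀ x y, 0 ≤ ξπ x y) ∧ ∀ x, ∑ y, ξπ x y = 1)
    (rπ : X → ℝ) (γ Rmax : ℝ) (hγ : γ ∈ Set.Ioo (0:ℝ) 1) (hR : 0 ≤ Rmax)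
    (hr : ∀ x, |rπ x| ≤ Rmax)
    (p0 : X → ℝ) (hp0 : (∀ x, 0 ≤ p0 x) ∧ ∑ x, p0 x = 1)
    (eπ : X → ℝ)
    (hdist : ∀ x, ∑ y, |Pπ x y - ξπ x y| ≤ 2 * eπ x) :
    |p0 ⬝ᵥ ((1 - γ • Pπ)⁻¹).mulVec rπ - p0 ⬝ᵥ ((1 - γ • ξπ)⁻¹).mulVec rπ|
      ≤ 2 * γ * Rmax / (1 - γ) * (p0 ⬝ᵥ ((1 - γ • Pπ)⁻¹).mulVec eπ) := by
  obtain ⟨hγ0, hγ1⟩ := hγ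
  rw [← mem_rowStochastic_iff_sum] at hP hξ
  set v := (1 - γ • ξπ)⁻¹ *ᵥ rπ
  have hv : ∀ y, |v y| ≤ Rmax / (1 - γ) :=
    abs_inv_one_sub_smul_mulVec_apply_le_div hξ hγ0.le hγ1 hr
  have hu : ∀ x, |((γ • (Pπ - ξπ)) *ᵥ v) x| ≤ ((2 * γ * Rmax / (1 - γ)) • eπ) x := by
    intro x
    have hRγ : 0 ≤ Rmax / (1 - γ) := div_nonneg hR (sub_pos.2 hγ1).le
    rw [smul_mulVec, Pi.smul_apply, smul_eq_mul, abs_mul, abs_of_pos hγ0]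
    calc γ * |((Pπ - ξπ) *ᵥ v) x| ≤ γ * ((∑ y, |(Pπ - ξπ) x y|) * (Rmax / (1 - γ))) := by
          gcongr; exact abs_mulVec_apply_le _ hv x
      _ ≤ γ * (2 * eπ x * (Rmax / (1 - γ))) := by gcongr; exact hdist x
      _ = _ := by simp only [Pi.smul_apply, smul_eq_mul]; ring
  calc |p0 ⬝ᵥ (1 - γ • Pπ)⁻¹ *ᵥ rπ - p0 ⬝ᵥ (1 - γ • ξπ)⁻¹ *ᵥ rπ|
      = |p0 ⬝ᵥ (1 - γ • Pπ)⁻¹ *ᵥ ((γ • (Pπ - ξπ)) *ᵥ v)| := by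
        rw [← dotProduct_sub, ← sub_mulVec, inv_one_sub_smul_sub_inv_one_sub_smul hP hγ0.le hγ1 hξ,
          ← mulVec_mulVec, ← mulVec_mulVec]
    _ ≤ p0 ⬝ᵥ (1 - γ • Pπ)⁻¹ *ᵥ ((2 * γ * Rmax / (1 - γ)) • eπ) :=
        abs_dotProduct_le_of_nonneg hp0.1
          (abs_inv_one_sub_smul_mulVec_apply_le hP hγ0.le hγ1 hu)
    _ = 2 * γ * Rmax / (1 - γ) * (p0 ⬝ᵥ (1 - γ • Pπ)⁻¹ *ᵥ eπ) := by
        rw [mulVec_smul, dotProduct_smul, smul_eq_mul]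

/-- simulation lemma — return difference of a fixed policy
under two transition models within `2 e` in ℓ1 distance. -/
theorem return_difference_bound {X : Type*} [Fintype X] [DecidableEq X] [Nonempty X]
    (Pπ ξπ : Matrix X X ℝ)
    (hP : (∀ x y, 0 ≤ Pπ x y) ∧ ∀ x, ∑ y, Pπ x y = 1)
    (hξ : (∀ x y, 0 ≤ ξπ x y) ∧ ∀ x, ∑ y, ξπ x y = 1)
    (rπ : X → ℝ) (γ Rmax : ℝ) (hγ : γ ∈ Set.Ioo (0:ℝ) 1) (hR : 0 ≤ Rmax)
    (hr : ∀ x, |rπ x| ≤ Rmax)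
    (p0 : X → ℝ) (hp0 : (∀ x, 0 ≤ p0 x) ∧ ∑ x, p0 x = 1)
    (eπ : X → ℝ) (he : ∀ x, 0 ≤ eπ x)
    (hdist : ∀ x, ∑ y, |Pπ x y - ξπ x y| ≤ 2 * eπ x) :
    |p0 ⬝ᵥ ((1 - γ • Pπ)⁻¹).mulVec rπ - p0 ⬝ᵥ ((1 - γ • ξπ)⁻¹).mulVec rπ|
      ≤ 2 * γ * Rmax / (1 - γ) * (p0 ⬝ᵥ ((1 - γ • Pπ)⁻¹).mulVec eπ) :=
  return_difference_bound_general Pπ ξπ hP hξ rπ γ Rmax hγ hR hr p0 hp0 eπ hdist
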